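/- arXiv:2003.01146 — 11 statements merged into one kernel-verified Lean document; each statement's English description precedes it below -/
import Mathlib

section
/- Let G be a group generated by a finite symmetric set S = {x_1,...,x_n}, and let ω : G × G → ℝ be a normalized 2-cocycle (i.e. ω(g,h) - ω(gh,k) + ω(g,hk) - ω(h,k) = 0 for all g,h,k, and ω(1,g) = ω(g,1) = 0). Suppose |ω(g, x_i)| ≤ C for every g ∈ G and i = 1,...,n. Then |ω(h,g)| ≤ 2C·‖g‖_S for every g, h ∈ G, where ‖g‖_S denotes the word length of g with respect to S. -/
/-- Word length of `g` with respect to a generating set `S`: the minimal number of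
factors from `S` needed to write `g` as a product. -/
noncomputable def wordLength {G : Type*} [Group G] (S : Set G) (g : G) : ℕ :=
  sInf {n | ∃ l : List G, l.length = n ∧ (∀ x ∈ l, x ∈ S) ∧ l.prod = g}

/-- If `ω` is a normalized real 2-cocycle on a group `G` generated by the finite
symmetric set `S`, and `|ω(g, x)| ≤ C` for all `g ∈ G`, `x ∈ S`, then
`|ω(h, g)| ≤ 2C·‖g‖_S` for all `g, h ∈ G`. -/
theorem stmt0 {G : Type*} [Group G] (S : Finset G)
    (hgen : ∀ g : G, ∃ l : List G, (∀ x ∈ l, x ∈ S) ∧ l.prod = g)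
    (hsymm : ∀ x ∈ S, x⁻¹ ∈ S)
    (ω : G → G → ℝ)
    (hcoc : ∀ g h k : G, ω h k - ω (g * h) k + ω g (h * k) - ω g h = 0)
    (hnorm : ∀ g : G, ω 1 g = 0 ∧ ω g 1 = 0)
    (C : ℝ) (hC : ∀ g : G, ∀ x ∈ S, |ω g x| ≤ C) :
    ∀ g h : G, |ω h g| ≤ 2 * C * (wordLength (S : Set G) g : ℝ) := by
  -- key lemma: bound for any word
  have key : ∀ (l : List G), (∀ x ∈ l, x ∈ S) → ∀ h : G,
      |ω h l.prod| ≤ 2 * C * (l.length : ℝ) := by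
    intro l
    induction l using List.reverseRecOn with
    | nil =>
      intro _ h
      simp [(hnorm h).2]
    | append_singleton l x ih =>
      intro hmem h
      have hx : x ∈ S := hmem x (by simp)
      have hl : ∀ y ∈ l, y ∈ S := fun y hy => hmem y (by simp [hy])
      have hIH := ih hl h
      have hcoc' := hcoc h l.prod x
      have heq : ω h (l.prod * x) = ω h l.prod + ω (h * l.prod) x - ω l.prod x := by
        linarith
      rw [List.prod_append, List.prod_singleton, heq]
      have h1 := hC (h * l.prod) x hx
      have h2 := hC l.prod x hx
      have habs : |ω h l.prod + ω (h * l.prod) x - ω l.prod x| ≤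
          |ω h l.prod| + |ω (h * l.prod) x| + |ω l.prod x| := by
        calc _ ≤ |ω h l.prod + ω (h * l.prod) x| + |ω l.prod x| := abs_sub _ _
          _ ≤ _ := by gcongr; exact abs_add_le _ _
      have h1' : |ω (h * l.prod) x| ≤ C := h1
      have : |ω h l.prod + ω (h * l.prod) x - ω l.prod x| ≤ 2 * C * l.length + 2 * C := by
        linarith
      simpa [mul_add] using this.trans_eq (by push_cast; ring)
  intro g h
  -- the infimum is achieved
  have hne : (wordLength (S : Set G) g) ∈
      {n | ∃ l : List G, l.length = n ∧ (∀ x ∈ l, x ∈ (S : Set G)) ∧ l.prod = g} := by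
    apply Nat.sInf_mem
    obtain ⟨l, hl, hp⟩ := hgen g
    exact ⟨l.length, l, rfl, fun x hx => hl x hx, hp⟩
  obtain ⟨l, hlen, hmem, hprod⟩ := hne
  have := key l (fun x hx => hmem x hx) h
  rw [hprod, hlen] at this
  exact this
end

section
/- Let G be an amenable group and let ω : G × G → ℝ be a 2-cocycle (inhomogeneous cocycle condition: ω(h,k) - ω(gh,k) + ω(g,hk) - ω(g,h) = 0) such that for every fixed h ∈ G the function g ↦ ω(g,h) is bounded. Then ω is a coboundary: there exists f : G → ℝ with ω(g,h) = f(h) - f(gh) + f(g) for all g,h ∈ G. -/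
/-- Any weakly bounded real 2-cocycle on an amenable group (amenability being encoded
by the existence of a right-invariant mean `μ` on bounded functions) is a coboundary. -/
theorem stmt1 {G : Type*} [Group G]
    (μ : (G → ℝ) → ℝ)
    (hconst : ∀ c : ℝ, μ (fun _ => c) = c)
    (hadd : ∀ f₁ f₂ : G → ℝ, (∃ C, ∀ x, |f₁ x| ≤ C) → (∃ C, ∀ x, |f₂ x| ≤ C) →
      μ (f₁ + f₂) = μ f₁ + μ f₂)
    (hsmul : ∀ (c : ℝ) (f : G → ℝ), (∃ C, ∀ x, |f x| ≤ C) → μ (c • f) = c * μ f)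
    (hmono : ∀ f₁ f₂ : G → ℝ, (∃ C, ∀ x, |f₁ x| ≤ C) → (∃ C, ∀ x, |f₂ x| ≤ C) →
      (∀ x, f₁ x ≤ f₂ x) → μ f₁ ≤ μ f₂)
    (hinv : ∀ (f : G → ℝ) (g : G), (∃ C, ∀ x, |f x| ≤ C) →
      μ (fun x => f (x * g)) = μ f)
    (ω : G → G → ℝ)
    (hcoc : ∀ g h k : G, ω h k - ω (g * h) k + ω g (h * k) - ω g h = 0)
    (hwb : ∀ h : G, ∃ C, ∀ g : G, |ω g h| ≤ C) :
    ∃ f : G → ℝ, ∀ g h : G, ω g h = f h - f (g * h) + f g := by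
  classical
  -- boundedness is closed under negation and addition
  have bneg : ∀ f : G → ℝ, (∃ C, ∀ x, |f x| ≤ C) → (∃ C, ∀ x, |(-f) x| ≤ C) := by
    rintro f ⟨C, hC⟩
    exact ⟨C, fun x => by simpa using hC x⟩
  have badd : ∀ f₁ f₂ : G → ℝ, (∃ C, ∀ x, |f₁ x| ≤ C) → (∃ C, ∀ x, |f₂ x| ≤ C) →
      (∃ C, ∀ x, |(f₁ + f₂) x| ≤ C) := by
    rintro f₁ f₂ ⟨C₁, h₁⟩ ⟨C₂, h₂⟩
    exact ⟨C₁ + C₂, fun x => (abs_add_le _ _).trans (add_le_add (h₁ x) (h₂ x))⟩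
  have hsub : ∀ f₁ f₂ : G → ℝ, (∃ C, ∀ x, |f₁ x| ≤ C) → (∃ C, ∀ x, |f₂ x| ≤ C) →
      μ (f₁ - f₂) = μ f₁ - μ f₂ := by
    intro f₁ f₂ h₁ h₂
    have e : f₁ - f₂ = f₁ + (-1 : ℝ) • f₂ := by
      ext x; simp [sub_eq_add_neg]
    have hb : (∃ C, ∀ x, |((-1 : ℝ) • f₂) x| ≤ C) := by
      have : (-1 : ℝ) • f₂ = -f₂ := by ext x; simp
      rw [this]; exact bneg f₂ h₂
    rw [e, hadd f₁ _ h₁ hb, hsmul (-1) f₂ h₂]; ring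
  refine ⟨fun k => μ (fun x => ω x k), ?_⟩
  intro g h
  -- the four functions of x
  set B : G → ℝ := fun x => ω (x * g) h with hB
  set C : G → ℝ := fun x => ω x (g * h) with hC
  set D : G → ℝ := fun x => ω x g with hD
  have bB : ∃ Cc, ∀ x, |B x| ≤ Cc := by
    obtain ⟨Cc, hCc⟩ := hwb h
    exact ⟨Cc, fun x => hCc (x * g)⟩
  have bC : ∃ Cc, ∀ x, |C x| ≤ Cc := hwb (g * h)
  have bD : ∃ Cc, ∀ x, |D x| ≤ Cc := hwb g
  have key : (B - C) + D = fun _ => ω g h := by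
    ext x
    have := hcoc x g h
    simp only [Pi.add_apply, Pi.sub_apply, hB, hC, hD]
    linarith
  have hμ : μ ((B - C) + D) = ω g h := by rw [key, hconst]
  have bBC : ∃ Cc, ∀ x, |(B - C) x| ≤ Cc := by
    have := badd B (-C) bB (bneg C bC)
    simpa [sub_eq_add_neg] using this
  rw [hadd (B - C) D bBC bD, hsub B C bB bC] at hμ
  have hBval : μ B = μ (fun x => ω x h) := hinv (fun x => ω x h) g (hwb h)
  rw [hBval] at hμ
  linarith
end

section
/- Let G be a group, Z a torsion-free finitely generated abelian group, and α ∈ H²(G, Z) a class of finite order n > 0, represented by a cocycle ω with nω = δf for some f : G → Z. Then the set G' = {g ∈ G : f(g) ∈ nZ} contains a finite-index subgroup of G on which the restriction of ω is a coboundary. -/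
/-- If a 2-cocycle `ω` on `G` with values in a torsion-free finitely generated abelian
group `Z` satisfies `n·ω = δf` for some `n > 0`, then `{g : f g ∈ nZ}` contains a
finite-index subgroup of `G` on which `ω` is a coboundary. -/
theorem stmt2 {G : Type*} [Group G] {Z : Type*} [AddCommGroup Z] [AddGroup.FG Z]
    (htf : ∀ (z : Z) (m : ℕ), m ≠ 0 → m • z = 0 → z = 0)
    (ω : G → G → Z)
    (hcoc : ∀ g h k : G, ω h k - ω (g * h) k + ω g (h * k) - ω g h = 0)
    (n : ℕ) (hn : 0 < n) (f : G → Z)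
    (hf : ∀ g h : G, n • ω g h = f h - f (g * h) + f g) :
    ∃ H : Subgroup G, H.index ≠ 0 ∧ (∀ g ∈ H, ∃ z : Z, f g = n • z) ∧
      ∃ F : G → Z, ∀ g ∈ H, ∀ h ∈ H, ω g h = F h - F (g * h) + F g := by
  classical
  set N : AddSubgroup Z := AddMonoidHom.range (n • AddMonoidHom.id Z) with hN
  have hmemN : ∀ z : Z, z ∈ N ↔ ∃ w : Z, n • w = z := by
    intro z
    simp [hN, AddMonoidHom.mem_range]
  have hf1 : f 1 ∈ N := by
    have := hf 1 1
    simp at this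
    exact (hmemN _).2 ⟨ω 1 1, this⟩
  -- the homomorphism G →* Multiplicative (Z ⧸ N)
  let π : Z →+ Z ⧸ N := QuotientAddGroup.mk' N
  have hπ : ∀ z : Z, π z = 0 ↔ z ∈ N := fun z => QuotientAddGroup.eq_zero_iff z
  let φ : G →* Multiplicative (Z ⧸ N) :=
    { toFun := fun g => Multiplicative.ofAdd (π (f g))
      map_one' := by
        simp only [Multiplicative.ofAdd]
        exact congrArg _ ((hπ _).2 hf1)
      map_mul' := by
        intro g h
        have key : f (g * h) - (f g + f h) ∈ N := by
          refine (hmemN _).2 ⟨-ω g h, ?_⟩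
          have := hf g h
          rw [smul_neg, this]
          abel
        have : π (f (g * h)) = π (f g) + π (f h) := by
          have := QuotientAddGroup.eq_iff_sub_mem.2 key
          simpa [π, QuotientAddGroup.mk'_apply, QuotientAddGroup.mk_add] using this
        exact congrArg Multiplicative.ofAdd this }
  refine ⟨φ.ker, ?_, ?_, ?_⟩
  · -- finite index
    have hfg : AddGroup.FG (Z ⧸ N) :=
      AddGroup.fg_of_surjective (f := π) (QuotientAddGroup.mk'_surjective N)
    have htor : AddMonoid.IsTorsion (Z ⧸ N) := by
      intro q
      obtain ⟨z, rfl⟩ := QuotientAddGroup.mk'_surjective N q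
      have : n • (π z) = 0 := by
        rw [← map_nsmul]
        exact (hπ _).2 ((hmemN _).2 ⟨z, rfl⟩)
      exact isOfFinAddOrder_iff_nsmul_eq_zero.2 ⟨n, hn, this⟩
    have : Finite (Z ⧸ N) := AddCommGroup.finite_of_fg_torsion _ htor
    have : Finite φ.range := Subgroup.instFiniteSubtypeMem _
    rw [Subgroup.index_ker]
    exact Nat.card_pos.ne'
  · intro g hg
    have : f g ∈ N := (hπ _).1 (by exact hg)
    obtain ⟨w, hw⟩ := (hmemN _).1 this
    exact ⟨w, hw.symm⟩
  · -- the coboundary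
    have hFex : ∀ z : Z, z ∈ N → ∃ w : Z, n • w = z := fun z hz => (hmemN _).1 hz
    let F : G → Z := fun g =>
      if h : f g ∈ N then (hFex _ h).choose else 0
    have hFspec : ∀ g : G, f g ∈ N → n • F g = f g := by
      intro g hg
      simp only [F, dif_pos hg]
      exact (hFex _ hg).choose_spec
    refine ⟨F, ?_⟩
    intro g hg h hh
    have hgN : f g ∈ N := (hπ _).1 (by exact hg)
    have hhN : f h ∈ N := (hπ _).1 (by exact hh)
    have hghN : f (g * h) ∈ N := (hπ _).1 (by exact mul_mem hg hh)
    have key : n • (ω g h - (F h - F (g * h) + F g)) = 0 := by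
      rw [smul_sub, hf g h]
      rw [smul_add, smul_sub, hFspec _ hgN, hFspec _ hhN, hFspec _ hghN]
      abel
    have := htf _ n hn.ne' key
    exact sub_eq_zero.1 this
end

section
/- Let G be a group and ω : Gⁿ → ℝ an n-cocycle (in the inhomogeneous bar complex with trivial ℝ coefficients) such that the class [ω] maps to zero in Hⁿ(G, ℓ^∞(G,ℝ)) under the map induced by including ℝ as constant functions in ℓ^∞(G,ℝ) (with G acting on ℓ^∞(G,ℝ) by (g·f)(h) = f(g⁻¹h)). Then [ω] has a weakly bounded representative: there exists f : Gⁿ⁻¹ → ℝ such that for each fixed (g₂,...,gₙ), the function g₁ ↦ (ω + δf)(g₁,g₂,...,gₙ) is bounded on G. -/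
/-- The inhomogeneous coboundary operator on bar-resolution cochains with trivial
coefficients in an abelian group `M`. -/
def dTriv {G : Type*} [Group G] {M : Type*} [AddCommGroup M] (n : ℕ)
    (φ : (Fin n → G) → M) : (Fin (n + 1) → G) → M :=
  fun g => φ (fun i => g i.succ) +
    ∑ j : Fin (n + 1), ((-1 : ℤ) ^ ((j : ℕ) + 1)) • φ (Fin.contractNth j (· * ·) g)

/-- The inhomogeneous coboundary operator on cochains with coefficients in
`ℓ^∞(G,ℝ)` (functions `G → ℝ`), for the action `(g·f)(h) = f(g⁻¹h)`. -/
def dLinf {G : Type*} [Group G] (n : ℕ)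
    (φ : (Fin n → G) → (G → ℝ)) : (Fin (n + 1) → G) → (G → ℝ) :=
  fun g h => φ (fun i => g i.succ) ((g 0)⁻¹ * h) +
    ∑ j : Fin (n + 1), ((-1 : ℝ) ^ ((j : ℕ) + 1)) * φ (Fin.contractNth j (· * ·) g) h

/-- If a real (n+1)-cocycle `ω` on `G` becomes a coboundary in the complex with
`ℓ^∞(G,ℝ)` coefficients (i.e. the class `ι*[ω]` vanishes), then `[ω]` has a weakly
bounded representative. -/
theorem stmt4 {G : Type*} [Group G] (n : ℕ)
    (ω : (Fin (n + 1) → G) → ℝ) (hcoc : dTriv (n + 1) ω = 0)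
    (φ : (Fin n → G) → (G → ℝ))
    (hφb : ∀ x : Fin n → G, ∃ C, ∀ h : G, |φ x h| ≤ C)
    (hφ : ∀ (x : Fin (n + 1) → G) (h : G), dLinf n φ x h = ω x) :
    ∃ f : (Fin n → G) → ℝ, ∀ tail : Fin n → G, ∃ C, ∀ g : G,
      |ω (Fin.cons g tail) + dTriv n f (Fin.cons g tail)| ≤ C := by
  refine ⟨fun x => -(φ x 1), fun tail => ?_⟩
  obtain ⟨C, hC⟩ := hφb tail
  refine ⟨2 * C, fun g => ?_⟩
  have h1 := hφ (Fin.cons g tail) 1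
  have key : ω (Fin.cons g tail) + dTriv n (fun x => -(φ x 1)) (Fin.cons g tail)
      = φ tail (g⁻¹ * 1) - φ tail 1 := by
    rw [← h1]
    simp only [dLinf, dTriv, Fin.cons_zero, Fin.cons_succ, zsmul_eq_mul, Int.cast_pow,
      Int.cast_neg, Int.cast_one, mul_neg, Finset.sum_neg_distrib]
    have he : (fun i => tail i) = tail := rfl
    rw [he]
    ring
  rw [key]
  calc |φ tail (g⁻¹ * 1) - φ tail 1| ≤ |φ tail (g⁻¹ * 1)| + |φ tail 1| := abs_sub _ _
    _ ≤ C + C := add_le_add (hC _) (hC _)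
    _ = 2 * C := by ring
end

section
/- Let G be a group and ω : Gⁿ → ℝ a weakly bounded n-cocycle (in the inhomogeneous bar complex with trivial ℝ coefficients). Define φ : Gⁿ⁻¹ → ℓ^∞(G,ℝ) by φ(g₁,...,gₙ₋₁)(h) = ω(h⁻¹, g₁,...,gₙ₋₁). Then δφ equals the image of ω in the complex C*(G, ℓ^∞(G,ℝ)) (constants inclusion), i.e. δφ(g₁,...,gₙ)(h) = ω(g₁,...,gₙ) for all h ∈ G; in particular the image of [ω] in Hⁿ(G, ℓ^∞(G,ℝ)) is zero. -/

lemma contract_zero_cons {G : Type*} [Group G] {n : ℕ} (a : G) (x : Fin (n + 1) → G) :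
    Fin.contractNth (0 : Fin (n + 2)) (· * ·) (Fin.cons a x) =
      Fin.cons (a * x 0) (fun i => x i.succ) := by
  funext k
  rcases Fin.eq_zero_or_eq_succ k with rfl | ⟨i, rfl⟩
  · rw [Fin.contractNth_apply_of_eq _ _ _ _ (by simp)]
    simp [Fin.succ_zero_eq_one]
  · rw [Fin.contractNth_apply_of_gt _ _ _ _ (by simp)]
    simp

lemma contract_succ_cons {G : Type*} [Group G] {n : ℕ} (a : G) (x : Fin (n + 1) → G)
    (j : Fin (n + 1)) :
    Fin.contractNth j.succ (· * ·) (Fin.cons a x) =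
      Fin.cons a (Fin.contractNth j (· * ·) x) := by
  funext k
  rcases Fin.eq_zero_or_eq_succ k with rfl | ⟨i, rfl⟩
  · rw [Fin.contractNth_apply_of_lt _ _ _ _ (by simp)]
    simp
  · rw [Fin.cons_succ]
    rcases lt_trichotomy (i : ℕ) (j : ℕ) with h | h | h
    · rw [Fin.contractNth_apply_of_lt _ _ _ _ (by simpa),
        Fin.contractNth_apply_of_lt _ _ _ _ h]
      simp [Fin.castSucc_fin_succ]
    · rw [Fin.contractNth_apply_of_eq _ _ _ _ (by simpa),
        Fin.contractNth_apply_of_eq _ _ _ _ h]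
      simp [Fin.castSucc_fin_succ]
    · rw [Fin.contractNth_apply_of_gt _ _ _ _ (by simpa),
        Fin.contractNth_apply_of_gt _ _ _ _ h]
      simp

/-- For a weakly bounded real (n+1)-cocycle `ω` on `G`, the cochain
`φ(g₁,…,gₙ)(h) = ω(h⁻¹,g₁,…,gₙ)` takes values in `ℓ^∞(G,ℝ)` and satisfies
`δφ = ι∘ω`; in particular the image of `[ω]` in `H^{n+1}(G, ℓ^∞(G,ℝ))` vanishes. -/
theorem stmt5 {G : Type*} [Group G] (n : ℕ)
    (ω : (Fin (n + 1) → G) → ℝ) (hcoc : dTriv (n + 1) ω = 0)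
    (hwb : ∀ tail : Fin n → G, ∃ C, ∀ g : G, |ω (Fin.cons g tail)| ≤ C) :
    (∀ x : Fin n → G, ∃ C, ∀ h : G,
      |(fun (y : Fin n → G) (k : G) => ω (Fin.cons k⁻¹ y)) x h| ≤ C) ∧
    ∀ (x : Fin (n + 1) → G) (h : G),
      dLinf n (fun (y : Fin n → G) (k : G) => ω (Fin.cons k⁻¹ y)) x h = ω x := by
  
  constructor
  · intro x
    obtain ⟨C, hC⟩ := hwb x
    exact ⟨C, fun h => hC h⁻¹⟩
  · intro x h
    have key := congrFun hcoc (Fin.cons h⁻¹ x)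
    simp only [dTriv, Pi.zero_apply] at key
    rw [Fin.sum_univ_succ] at key
    simp only [Fin.val_zero, Fin.val_succ, contract_zero_cons, contract_succ_cons,
      Fin.cons_succ, zsmul_eq_mul, Int.cast_pow, Int.cast_neg, Int.cast_one] at key
    have hx : (fun i => x i) = x := rfl
    rw [hx] at key
    simp only [dLinf]
    have hx0 : ((x 0)⁻¹ * h)⁻¹ = h⁻¹ * x 0 := by group
    rw [hx0]
    have hsum : ∑ j : Fin (n + 1),
        ((-1 : ℝ) ^ ((j : ℕ) + 1)) * ω (Fin.cons h⁻¹ (Fin.contractNth j (· * ·) x)) =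
        - ∑ j : Fin (n + 1),
        ((-1 : ℝ) ^ ((j : ℕ) + 1 + 1)) * ω (Fin.cons h⁻¹ (Fin.contractNth j (· * ·) x)) := by
      rw [← Finset.sum_neg_distrib]
      exact Finset.sum_congr rfl fun j _ => by ring
    rw [hsum]
    linarith [key]
end

section
/- Let G be a group and α ∈ Hⁿ(G,ℤ) (bar-resolution group cohomology with trivial integer coefficients). If the image α_ℝ of α under the change of coefficients ℤ → ℝ admits a representative cocycle ω : Gⁿ → ℝ that is bounded (sup over Gⁿ of |ω| finite), then α admits a bounded representative cocycle with values in ℤ. -/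
lemma dTriv_cast {G : Type*} [Group G] (n : ℕ) (φ : (Fin n → G) → ℤ)
    (x : Fin (n + 1) → G) :
    ((dTriv n φ x : ℤ) : ℝ) = dTriv n (fun y => (φ y : ℝ)) x := by
  simp [dTriv]

lemma dTriv_bound {G : Type*} [Group G] (n : ℕ) (φ : (Fin n → G) → ℝ)
    (h : ∀ y, |φ y| ≤ 1) (x : Fin (n + 1) → G) :
    |dTriv n φ x| ≤ (n : ℝ) + 2 := by
  unfold dTriv
  calc |φ (fun i => x i.succ) +
        ∑ j : Fin (n + 1), ((-1 : ℤ) ^ ((j : ℕ) + 1)) • φ (Fin.contractNth j (· * ·) x)|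
      ≤ |φ (fun i => x i.succ)| +
        |∑ j : Fin (n + 1), ((-1 : ℤ) ^ ((j : ℕ) + 1)) • φ (Fin.contractNth j (· * ·) x)| :=
        abs_add_le _ _
    _ ≤ 1 + ∑ j : Fin (n + 1), |((-1 : ℤ) ^ ((j : ℕ) + 1)) • φ (Fin.contractNth j (· * ·) x)| := by
        gcongr
        · exact h _
        · exact Finset.abs_sum_le_sum_abs _ _
    _ ≤ 1 + ∑ _j : Fin (n + 1), (1 : ℝ) := by
        gcongr with j
        rw [zsmul_eq_mul, abs_mul]
        calc |((((-1 : ℤ) ^ ((j : ℕ) + 1)) : ℤ) : ℝ)| * |φ (Fin.contractNth j (· * ·) x)|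
            = 1 * |φ (Fin.contractNth j (· * ·) x)| := by
              push_cast
              rw [abs_pow, abs_neg, abs_one, one_pow]
          _ ≤ 1 := by rw [one_mul]; exact h _
    _ = (n : ℝ) + 2 := by simp; ring

/-- If the real class obtained from an integral (n+1)-cocycle `ω₀` by change of
coefficients has a bounded representative (`ω₀ + δf` bounded for some real `f`),
then `[ω₀]` has a bounded integral representative. -/
theorem stmt6 {G : Type*} [Group G] (n : ℕ)
    (ω₀ : (Fin (n + 1) → G) → ℤ) (hcoc : dTriv (n + 1) ω₀ = 0)
    (f : (Fin n → G) → ℝ)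
    (hb : ∃ C : ℝ, ∀ x : Fin (n + 1) → G, |(ω₀ x : ℝ) + dTriv n f x| ≤ C) :
    ∃ f' : (Fin n → G) → ℤ, ∃ C : ℤ, ∀ x : Fin (n + 1) → G,
      |ω₀ x + dTriv n f' x| ≤ C := by
  obtain ⟨C, hC⟩ := hb
  refine ⟨fun y => ⌊f y⌋, ⌈C⌉ + (n + 2), fun x => ?_⟩
  have key : ((ω₀ x + dTriv n (fun y => ⌊f y⌋) x : ℤ) : ℝ)
      = ((ω₀ x : ℝ) + dTriv n f x) + dTriv n (fun y => (⌊f y⌋ : ℝ) - f y) x := by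
    push_cast
    rw [dTriv_cast]
    unfold dTriv
    push_cast
    simp only [smul_sub, Finset.sum_sub_distrib]
    ring
  have hfrac : ∀ y : Fin n → G, |(⌊f y⌋ : ℝ) - f y| ≤ 1 := by
    intro y
    rw [abs_le]
    constructor
    · linarith [Int.lt_floor_add_one (f y)]
    · linarith [Int.floor_le (f y)]
  have h2 := dTriv_bound n (fun y => (⌊f y⌋ : ℝ) - f y) hfrac x
  have : |((ω₀ x + dTriv n (fun y => ⌊f y⌋) x : ℤ) : ℝ)| ≤ C + ((n : ℝ) + 2) := by
    rw [key]
    calc _ ≤ |(ω₀ x : ℝ) + dTriv n f x| + |dTriv n (fun y => (⌊f y⌋ : ℝ) - f y) x| :=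
          abs_add_le _ _
      _ ≤ C + ((n : ℝ) + 2) := add_le_add (hC x) h2
  have hcast : ((|ω₀ x + dTriv n (fun y => ⌊f y⌋) x| : ℤ) : ℝ)
      ≤ ((⌈C⌉ + (n + 2) : ℤ) : ℝ) := by
    push_cast
    rw [← Int.cast_add]
    refine this.trans ?_
    have := Int.le_ceil C
    push_cast
    linarith
  exact_mod_cast hcast
end

section
/- Let G be a group for which every weakly bounded class in H²(G,ℤ) is bounded. Then for every finitely generated abelian group A, every weakly bounded class in H²(G,A) is bounded. -/
/-!
Decompose `A ≅ ℤⁿ × T` with `T` finite. Composing a cocycle with a homomorphism preserves the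
cocycle identity and weak boundedness, so each `ℤ`-coordinate of `ω` is cohomologous to a
bounded cocycle by hypothesis, while the `T`-coordinate is bounded outright. Boundedness of
representatives is compatible with finite products and with pushing forward along
homomorphisms, which reassembles a bounded representative of `ω`.
-/

section BoundedCohomology

variable {G A B C : Type*}

def IsWeaklyBounded (ω : G → G → A) : Prop :=
  ∀ h : G, (Set.range fun g : G => ω g h).Finite

theorem IsWeaklyBounded.map {ω : G → G → A} (hω : IsWeaklyBounded ω) (φ : A → B) :
    IsWeaklyBounded fun g h => φ (ω g h) := fun h => by
  simpa only [Set.range_comp'] using (hω h).image φ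

variable [Group G] [AddCommGroup A] [AddCommGroup B] [AddCommGroup C]

def twoCoboundary (f : G → A) (g h : G) : A :=
  f h - f (g * h) + f g

def IsTwoCocycle (ω : G → G → A) : Prop :=
  ∀ g h k : G, ω h k - ω (g * h) k + ω g (h * k) - ω g h = 0

def HasBoundedRepresentative (ω : G → G → A) : Prop :=
  ∃ f : G → A, (Set.range fun p : G × G => ω p.1 p.2 + twoCoboundary f p.1 p.2).Finite

theorem IsTwoCocycle.map {ω : G → G → A} (hω : IsTwoCocycle ω) (φ : A →+ B) :
    IsTwoCocycle fun g h => φ (ω g h) := fun g h k => by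
  simpa only [map_add, map_sub, map_zero] using congrArg φ (hω g h k)

theorem HasBoundedRepresentative.map {ω : G → G → A} (hω : HasBoundedRepresentative ω)
    (φ : A →+ B) : HasBoundedRepresentative fun g h => φ (ω g h) := by
  obtain ⟨f, hf⟩ := hω
  refine ⟨fun g => φ (f g), (hf.image φ).subset ?_⟩
  rintro _ ⟨p, rfl⟩
  exact ⟨_, ⟨p, rfl⟩, by simp only [twoCoboundary, map_add, map_sub]⟩

theorem HasBoundedRepresentative.of_finite [Finite A] (ω : G → G → A) :
    HasBoundedRepresentative ω :=
  ⟨0, Set.toFinite _⟩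

theorem HasBoundedRepresentative.prod {ω : G → G → B × C}
    (h₁ : HasBoundedRepresentative fun g h => (ω g h).1)
    (h₂ : HasBoundedRepresentative fun g h => (ω g h).2) :
    HasBoundedRepresentative ω := by
  obtain ⟨f₁, hf₁⟩ := h₁
  obtain ⟨f₂, hf₂⟩ := h₂
  refine ⟨fun g => (f₁ g, f₂ g), (hf₁.prod hf₂).subset ?_⟩
  rintro _ ⟨p, rfl⟩
  exact ⟨⟨p, rfl⟩, ⟨p, rfl⟩⟩

theorem HasBoundedRepresentative.pi {ι : Type*} [Finite ι] {β : ι → Type*}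
    [∀ i, AddCommGroup (β i)] {ω : G → G → ∀ i, β i}
    (hω : ∀ i, HasBoundedRepresentative fun g h => ω g h i) :
    HasBoundedRepresentative ω := by
  choose f hf using hω
  refine ⟨fun g i => f i g, (Set.Finite.pi hf).subset ?_⟩
  rintro _ ⟨p, rfl⟩ i -
  exact ⟨p, rfl⟩

end BoundedCohomology

/-- If every weakly bounded class in `H²(G,ℤ)` is bounded, then for every finitely
generated abelian coefficient group `A`, every weakly bounded class in `H²(G,A)`
is bounded. (A subset of a finitely generated abelian group is bounded iff finite.) -/
theorem stmt8 {G : Type*} [Group G]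
    (hZ : ∀ ω : G → G → ℤ,
      (∀ g h k : G, ω h k - ω (g * h) k + ω g (h * k) - ω g h = 0) →
      (∀ h : G, (Set.range fun g : G => ω g h).Finite) →
      ∃ f : G → ℤ,
        (Set.range fun p : G × G => ω p.1 p.2 + (f p.2 - f (p.1 * p.2) + f p.1)).Finite)
    (A : Type*) [AddCommGroup A] [AddGroup.FG A]
    (ω : G → G → A)
    (hcoc : ∀ g h k : G, ω h k - ω (g * h) k + ω g (h * k) - ω g h = 0)
    (hwb : ∀ h : G, (Set.range fun g : G => ω g h).Finite) :
    ∃ f : G → A,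
      (Set.range fun p : G × G => ω p.1 p.2 + (f p.2 - f (p.1 * p.2) + f p.1)).Finite := by
  change HasBoundedRepresentative ω
  obtain ⟨n, ι, _, p, hp, e, ⟨φ⟩⟩ := AddCommGroup.equiv_free_prod_directSum_zmod A
  have : ∀ i, NeZero (p i ^ e i) := fun i => ⟨pow_ne_zero _ (hp i).ne_zero⟩
  have : Finite (DirectSum ι fun i => ZMod (p i ^ e i)) :=
    .of_equiv (∀ i, ZMod (p i ^ e i)) (DirectSum.addEquivProd _).symm.toEquiv
  let ψ : A ≃+ (Fin n → ℤ) × DirectSum ι fun i => ZMod (p i ^ e i) :=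
    φ.trans (Finsupp.addEquivFunOnFinite.prodCongr (AddEquiv.refl _))
  have hfree : HasBoundedRepresentative fun g h => (ψ (ω g h)).1 := .pi fun i =>
    let πᵢ := (Pi.evalAddMonoidHom _ i).comp ((AddMonoidHom.fst _ _).comp ψ.toAddMonoidHom)
    hZ _ (IsTwoCocycle.map hcoc πᵢ) (IsWeaklyBounded.map hwb πᵢ)
  simpa only [AddEquiv.coe_toAddMonoidHom, AddEquiv.symm_apply_apply] using
    (hfree.prod (.of_finite _)).map ψ.symm.toAddMonoidHom
end

section
/- Let F be a free group with free basis S, let {r_i}_{i∈ℕ} ⊆ F and let N be the normal closure of {r_i} in F. For w ∈ N define A(w) as the minimum of Σ_{l=1}^k (2i_l + 1) over all expressions w = ∏_{l=1}^k w_l r_{i_l}^{±1} w_l⁻¹. Suppose for the specific relators r_i of the paper's presentation (with |r_i| = 16i+8, satisfying C'(1/7)) that Greendlinger's lemma holds: every nontrivial cyclically reduced w ∈ N contains a subword w₀ of some cyclic conjugate r'_i of a relator with |w₀| > (4/7)|r_i|. Then A(w) ≤ |w| for every w ∈ N, where |w| is the reduced word length of w. -/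
namespace Stmt10

variable {α : Type*} [DecidableEq α]

/-- The weighted area of `w` with respect to the relators `r i` (the relator `r i`
having cost `2i + 1`): the minimum of `Σ (2iₗ + 1)` over all ways of writing `w` as a
product of conjugates of the `r iₗ` and their inverses. -/
noncomputable def area (r : ℕ → FreeGroup α) (w : FreeGroup α) : ℕ :=
  sInf {s | ∃ L : List (FreeGroup α × ℕ × Bool),
    w = (L.map fun p => p.1 * (r p.2.1) ^ (if p.2.2 then (1 : ℤ) else -1) * p.1⁻¹).prod ∧
    s = (L.map fun p => 2 * p.2.1 + 1).sum}

/-- Every element of the normal closure of the relators admits an expression as a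
product of conjugates of relators and their inverses. -/
lemma exists_rep (r : ℕ → FreeGroup α) {w : FreeGroup α}
    (hw : w ∈ Subgroup.normalClosure (Set.range r)) :
    ∃ L : List (FreeGroup α × ℕ × Bool),
      w = (L.map fun p => p.1 * (r p.2.1) ^ (if p.2.2 then (1 : ℤ) else -1) * p.1⁻¹).prod := by
  refine Subgroup.closure_induction ?_ ?_ ?_ ?_ hw
  · rintro x hx
    rw [Group.mem_conjugatesOfSet_iff] at hx
    obtain ⟨a, ⟨i, rfl⟩, hconj⟩ := hx
    obtain ⟨c, rfl⟩ := isConj_iff.1 hconj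
    exact ⟨[(c, i, true)], by simp⟩
  · exact ⟨[], rfl⟩
  · rintro x y _ _ ⟨L₁, rfl⟩ ⟨L₂, rfl⟩
    exact ⟨L₁ ++ L₂, by simp⟩
  · rintro x _ ⟨L, rfl⟩
    refine ⟨L.reverse.map fun p => (p.1, p.2.1, !p.2.2), ?_⟩
    rw [List.prod_inv_reverse]
    congr 1
    simp only [List.map_reverse, List.map_map]
    congr 1
    apply List.map_congr_left
    rintro ⟨c, i, ε⟩ _
    cases ε <;> simp [mul_assoc]
  
/-- One step of the area recursion. -/
lemma area_step (r : ℕ → FreeGroup α) {w w' u : FreeGroup α} {i : ℕ} (ε : Bool)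
    (hw' : w' ∈ Subgroup.normalClosure (Set.range r))
    (h : w = u * (r i) ^ (if ε then (1 : ℤ) else -1) * u⁻¹ * w') :
    area r w ≤ 2 * i + 1 + area r w' := by
  obtain ⟨L₀, hL₀⟩ := exists_rep r hw'
  have hne : {s | ∃ L : List (FreeGroup α × ℕ × Bool),
      w' = (L.map fun p => p.1 * (r p.2.1) ^ (if p.2.2 then (1 : ℤ) else -1) * p.1⁻¹).prod ∧
      s = (L.map fun p => 2 * p.2.1 + 1).sum}.Nonempty := ⟨_, L₀, hL₀, rfl⟩
  obtain ⟨L, hLw, hLs⟩ := Nat.sInf_mem hne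
  refine Nat.sInf_le ⟨(u, i, ε) :: L, ?_, ?_⟩
  · simp only [List.map_cons, List.prod_cons, ← hLw, h]
  · simp only [List.map_cons, List.sum_cons]
    have h' : area r w' = (L.map fun p => 2 * p.2.1 + 1).sum := hLs
    omega

/-- Decomposition: peeling off a relator along a long subword. -/
lemma decomp {w R : FreeGroup α} {k : ℕ} {w₀ : List (α × Bool)}
    (hinf : w₀ <:+: w.toWord) (hpre : w₀ <+: R.toWord.rotate k) :
    ∃ u w' : FreeGroup α, w = u * R * u⁻¹ * w' ∧
      w'.toWord.length + 2 * w₀.length ≤ w.toWord.length + R.toWord.length ∧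
      w₀.length ≤ R.toWord.length := by
  classical
  obtain ⟨a, b, hab⟩ := hinf
  obtain ⟨v, hv⟩ := hpre
  have hrot : R.toWord.rotate k
      = R.toWord.drop (k % R.toWord.length) ++ R.toWord.take (k % R.toWord.length) :=
    List.rotate_eq_drop_append_take_mod
  set c : FreeGroup α := FreeGroup.mk (R.toWord.take (k % R.toWord.length)) with hc
  set d : FreeGroup α := FreeGroup.mk (R.toWord.drop (k % R.toWord.length)) with hd
  have h1 : c * d = R := by
    rw [hc, hd, FreeGroup.mul_mk, List.take_append_drop, FreeGroup.mk_toWord]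
  have h2 : FreeGroup.mk w₀ * FreeGroup.mk v = d * c := by
    rw [FreeGroup.mul_mk, hv, hrot, hc, hd, FreeGroup.mul_mk]
  have h3 : w = FreeGroup.mk a * FreeGroup.mk w₀ * FreeGroup.mk b := by
    rw [FreeGroup.mul_mk, FreeGroup.mul_mk, hab, FreeGroup.mk_toWord]
  have h4 : FreeGroup.mk w₀ = d * c * (FreeGroup.mk v)⁻¹ := by
    rw [← h2]; group
  refine ⟨FreeGroup.mk a * c⁻¹, FreeGroup.mk a * (FreeGroup.mk v)⁻¹ * FreeGroup.mk b,
    ?_, ?_, ?_⟩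
  · rw [h3, h4, ← h1]; group
  · have e1 : w.toWord.length = a.length + w₀.length + b.length := by
      rw [← hab]; simp; omega
    have e2 : w₀.length + v.length = R.toWord.length := by
      have := congrArg List.length hv
      simpa using this
    have e3 : (FreeGroup.mk a * (FreeGroup.mk v)⁻¹ * FreeGroup.mk b).toWord.length
        ≤ a.length + v.length + b.length := by
      have : FreeGroup.mk a * (FreeGroup.mk v)⁻¹ * FreeGroup.mk b
          = FreeGroup.mk (a ++ FreeGroup.invRev v ++ b) := by
        rw [FreeGroup.inv_mk, FreeGroup.mul_mk, FreeGroup.mul_mk]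
      rw [this]
      calc (FreeGroup.mk (a ++ FreeGroup.invRev v ++ b)).toWord.length
          ≤ (a ++ FreeGroup.invRev v ++ b).length := FreeGroup.norm_mk_le
        _ = a.length + v.length + b.length := by
            simp [FreeGroup.invRev_length]; omega
    omega
  · have e2 : w₀.length + v.length = R.toWord.length := by
      have := congrArg List.length hv
      simpa using this
    omega

/-- Weighted linear isoperimetric inequality: if `|r i| = 16i + 8` and Greendlinger's
lemma holds (every nontrivial `w` in the normal closure `N` of the relators contains a
subword `w₀` of a cyclic conjugate of some `r i` or its inverse with
`|w₀| > (4/7)|r i|`), then `A(w) ≤ |w|` for every `w ∈ N`. -/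
theorem stmt10 (r : ℕ → FreeGroup α)
    (hlen : ∀ i : ℕ, (r i).toWord.length = 16 * i + 8)
    (hGreen : ∀ w : FreeGroup α,
      w ∈ Subgroup.normalClosure (Set.range r) → w ≠ 1 →
      ∃ (i k : ℕ) (w₀ : List (α × Bool)),
        w₀ <:+: w.toWord ∧
        (w₀ <+: (((r i).toWord).rotate k) ∨ w₀ <+: ((((r i)⁻¹).toWord).rotate k)) ∧
        7 * w₀.length > 4 * (r i).toWord.length) :
    ∀ w ∈ Subgroup.normalClosure (Set.range r), area r w ≤ w.toWord.length := by
  have harea1 : area r (1 : FreeGroup α) = 0 :=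
    Nat.le_zero.1 (Nat.sInf_le ⟨[], by simp, by simp⟩)
  suffices H : ∀ n, ∀ w ∈ Subgroup.normalClosure (Set.range r),
      w.toWord.length ≤ n → area r w ≤ w.toWord.length by
    intro w hw; exact H _ w hw le_rfl
  intro n
  induction n with
  | zero =>
    intro w hw hn
    have hw1 : w = 1 := by
      rw [← FreeGroup.toWord_eq_nil_iff, ← List.length_eq_zero_iff]
      omega
    subst hw1
    simp [harea1]
  | succ n ih =>
    intro w hw hn
    by_cases h1 : w = 1
    · subst h1; simp [harea1]
    obtain ⟨i, k, w₀, hinf, hpre, h7⟩ := hGreen w hw h1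
    rw [hlen i] at h7
    have key : ∀ (R : FreeGroup α) (ε : Bool),
        R = r i ^ (if ε then (1 : ℤ) else -1) → R.toWord.length = 16 * i + 8 →
        w₀ <+: R.toWord.rotate k → area r w ≤ w.toWord.length := by
      intro R ε hR hRlen hpre'
      obtain ⟨u, w', hde, hl1, hl2⟩ := decomp hinf hpre'
      have hRN : R ∈ Subgroup.normalClosure (Set.range r) := by
        rw [hR]
        exact Subgroup.zpow_mem _ (Subgroup.subset_normalClosure (Set.mem_range_self i)) _
      have hconjN : u * R * u⁻¹ ∈ Subgroup.normalClosure (Set.range r) :=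
        Subgroup.Normal.conj_mem inferInstance R hRN u
      have hw'N : w' ∈ Subgroup.normalClosure (Set.range r) := by
        have : w' = (u * R * u⁻¹)⁻¹ * w := by rw [hde]; group
        rw [this]
        exact Subgroup.mul_mem _ (Subgroup.inv_mem _ hconjN) hw
      have hstep : area r w ≤ 2 * i + 1 + area r w' :=
        area_step r ε hw'N (by rw [hde, hR])
      have hlt : w'.toWord.length + (2 * i + 1) ≤ w.toWord.length := by omega
      have hih : area r w' ≤ w'.toWord.length := ih w' hw'N (by omega)
      omega
    rcases hpre with hpre | hpre
    · exact key (r i) true (by simp) (hlen i) hpre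
    · refine key (r i)⁻¹ false (by simp) ?_ hpre
      rw [FreeGroup.toWord_inv, FreeGroup.invRev_length, hlen i]

end Stmt10
end

section
/- Let G be a group and α ∈ H²(G,ℝ) a weakly bounded class. Then for every amenable group A and every group homomorphism f : A → G, the pullback f*(α) ∈ H²(A,ℝ) is zero. Consequently, for every β ∈ H₂(G,ℝ) lying in the image of f_* : H₂(A,ℝ) → H₂(G,ℝ), the Kronecker pairing ⟨α, β⟩ vanishes. -/
/-- Let `ω` be a real 2-cocycle on `G` whose class is weakly bounded (cohomologous to a
weakly bounded cocycle). Then for every amenable group `A` (amenability encoded by a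
right-invariant mean `μ`) and every homomorphism `f : A → G`, the pullback cocycle is a
coboundary (`f*(α) = 0`), and consequently `α` pairs to zero with the pushforward of
every 2-cycle of `A` (Kronecker pairing in the bar complex). -/
theorem stmt14 {G : Type*} [Group G]
    (ω : G → G → ℝ)
    (hcoc : ∀ g h k : G, ω h k - ω (g * h) k + ω g (h * k) - ω g h = 0)
    (hwb : ∃ ω' : G → G → ℝ, (∀ h : G, ∃ C, ∀ g : G, |ω' g h| ≤ C) ∧
      ∃ F : G → ℝ, ∀ g h : G, ω g h - ω' g h = F h - F (g * h) + F g)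
    (A : Type*) [Group A] [DecidableEq A]
    (μ : (A → ℝ) → ℝ)
    (hconst : ∀ c : ℝ, μ (fun _ => c) = c)
    (hadd : ∀ f₁ f₂ : A → ℝ, (∃ C, ∀ x, |f₁ x| ≤ C) → (∃ C, ∀ x, |f₂ x| ≤ C) →
      μ (f₁ + f₂) = μ f₁ + μ f₂)
    (hsmul : ∀ (c : ℝ) (f : A → ℝ), (∃ C, ∀ x, |f x| ≤ C) → μ (c • f) = c * μ f)
    (hinv : ∀ (f : A → ℝ) (g : A), (∃ C, ∀ x, |f x| ≤ C) →
      μ (fun x => f (x * g)) = μ f)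
    (f : A →* G) :
    (∃ F : A → ℝ, ∀ a b : A, ω (f a) (f b) = F b - F (a * b) + F a) ∧
    (∀ c : (A × A) →₀ ℝ,
      (∀ x : A, (c.sum fun p v => v * ((if p.2 = x then (1 : ℝ) else 0) -
        (if p.1 * p.2 = x then 1 else 0) + (if p.1 = x then 1 else 0))) = 0) →
      (c.sum fun p v => v * ω (f p.1) (f p.2)) = 0) := by
  obtain ⟨ω', hbd, F, hF⟩ := hwb
  -- ω' is also a cocycle
  have hcoc' : ∀ g h k : G, ω' h k - ω' (g * h) k + ω' g (h * k) - ω' g h = 0 := by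
    intro g h k
    have h1 := hF h k
    have h2 := hF (g * h) k
    have h3 := hF g (h * k)
    have h4 := hF g h
    have h5 := hcoc g h k
    rw [mul_assoc] at h2
    linarith
  -- define the averaged primitive
  set hA : A → ℝ := fun a => μ (fun x => ω' (f x) (f a)) with hAdef
  have hbdA : ∀ a : A, ∃ C, ∀ x : A, |ω' (f x) (f a)| ≤ C := by
    intro a
    obtain ⟨C, hC⟩ := hbd (f a)
    exact ⟨C, fun x => hC (f x)⟩
  have key : ∀ a b : A, ω' (f a) (f b) = hA b - hA (a * b) + hA a := by
    intro a b
    set t1 : A → ℝ := fun x => ω' (f x) (f b) with ht1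
    set t2 : A → ℝ := fun x => ω' (f x) (f (a * b)) with ht2
    set t3 : A → ℝ := fun x => ω' (f x) (f a) with ht3
    obtain ⟨C1, hC1⟩ := hbdA b
    obtain ⟨C2, hC2⟩ := hbdA (a * b)
    obtain ⟨C3, hC3⟩ := hbdA a
    have hptw : ∀ x : A, ω' (f a) (f b) = t1 (x * a) - t2 x + t3 x := by
      intro x
      have := hcoc' (f x) (f a) (f b)
      simp only [ht1, ht2, ht3, map_mul]
      linarith
    have hfe : (fun _ : A => ω' (f a) (f b))
        = ((fun x => t1 (x * a)) + (-1 : ℝ) • t2) + t3 := by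
      funext x
      have := hptw x
      simp only [Pi.add_apply, Pi.smul_apply, smul_eq_mul]
      linarith
    have hb12 : ∃ C, ∀ x : A, |((fun x => t1 (x * a)) + (-1 : ℝ) • t2) x| ≤ C := by
      refine ⟨C1 + C2, fun x => ?_⟩
      simp only [Pi.add_apply, Pi.smul_apply, smul_eq_mul]
      calc |t1 (x * a) + -1 * t2 x| ≤ |t1 (x * a)| + |(-1) * t2 x| := abs_add_le _ _
        _ ≤ C1 + C2 := by
            rw [abs_mul, abs_neg, abs_one, one_mul]
            exact add_le_add (hC1 _) (hC2 _)
    have e1 : μ (fun x => t1 (x * a)) = hA b := hinv t1 a ⟨C1, hC1⟩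
    have e2 : μ ((-1 : ℝ) • t2) = -1 * hA (a * b) := hsmul (-1) t2 ⟨C2, hC2⟩
    have e3 : μ t3 = hA a := rfl
    have := hconst (ω' (f a) (f b))
    rw [hfe] at this
    rw [hadd _ _ hb12 ⟨C3, hC3⟩,
      hadd _ _ ⟨C1, fun x => hC1 (x * a)⟩
        ⟨C2, fun x => by
          simp only [Pi.smul_apply, smul_eq_mul, abs_mul, abs_neg, abs_one, one_mul]
          exact hC2 x⟩, e1, e2, e3] at this
    linarith
  -- the total primitive
  have main : ∀ a b : A, ω (f a) (f b)
      = (hA b + F (f b)) - (hA (a * b) + F (f (a * b))) + (hA a + F (f a)) := by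
    intro a b
    have h1 := hF (f a) (f b)
    have h2 := key a b
    rw [← map_mul] at h1
    linarith
  refine ⟨⟨fun a => hA a + F (f a), main⟩, ?_⟩
  intro c hcyc
  set Ft : A → ℝ := fun a => hA a + F (f a) with hFt
  classical
  set S : Finset A := c.support.image Prod.fst ∪ c.support.image Prod.snd ∪
    c.support.image (fun p => p.1 * p.2) with hS
  have hmem : ∀ p ∈ c.support, p.1 ∈ S ∧ p.2 ∈ S ∧ p.1 * p.2 ∈ S := by
    intro p hp
    refine ⟨?_, ?_, ?_⟩
    · exact Finset.mem_union.2 (Or.inl (Finset.mem_union.2 (Or.inl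
        (Finset.mem_image.2 ⟨p, hp, rfl⟩))))
    · exact Finset.mem_union.2 (Or.inl (Finset.mem_union.2 (Or.inr
        (Finset.mem_image.2 ⟨p, hp, rfl⟩))))
    · exact Finset.mem_union.2 (Or.inr (Finset.mem_image.2 ⟨p, hp, rfl⟩))
  have sumδ : ∀ a : A, a ∈ S → ∀ Fv : A → ℝ,
      (∑ x ∈ S, Fv x * (if a = x then (1 : ℝ) else 0)) = Fv a := by
    intro a ha Fv
    rw [Finset.sum_congr rfl (fun x _ => by rw [mul_ite, mul_one, mul_zero]),
      Finset.sum_ite_eq S a Fv]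
    simp [ha]
  have step : (c.sum fun p v => v * ω (f p.1) (f p.2))
      = ∑ x ∈ S, Ft x * (c.sum fun p v => v * ((if p.2 = x then (1 : ℝ) else 0) -
        (if p.1 * p.2 = x then 1 else 0) + (if p.1 = x then 1 else 0))) := by
    simp only [Finsupp.sum, Finset.mul_sum]
    rw [Finset.sum_comm]
    refine Finset.sum_congr rfl fun p hp => ?_
    obtain ⟨h1, h2, h12⟩ := hmem p hp
    have : ∑ x ∈ S, Ft x * (c p * ((if p.2 = x then (1 : ℝ) else 0) -
        (if p.1 * p.2 = x then 1 else 0) + (if p.1 = x then 1 else 0)))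
        = c p * ((∑ x ∈ S, Ft x * (if p.2 = x then (1 : ℝ) else 0))
          - (∑ x ∈ S, Ft x * (if p.1 * p.2 = x then (1 : ℝ) else 0))
          + (∑ x ∈ S, Ft x * (if p.1 = x then (1 : ℝ) else 0))) := by
      rw [← Finset.sum_sub_distrib, ← Finset.sum_add_distrib, Finset.mul_sum]
      exact Finset.sum_congr rfl fun x _ => by ring
    rw [this, sumδ _ h2, sumδ _ h12, sumδ _ h1, main p.1 p.2]
  rw [step]
  rw [Finset.sum_congr rfl fun x _ => by rw [hcyc x, mul_zero]]
  exact Finset.sum_const_zero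
end

section
/- Let G be a finitely generated group, Z a finitely generated abelian group, and 1 → Z → E →^π G → 1 a central extension with a normalized set-theoretic section s : G → E (s(1)=1). If s is Lipschitz with respect to word metrics (with a compatible finite generating set of E containing lifts of generators of G and generators of Z), then the associated ypecocycle ω(g,h) = s(g)s(h)s(gh)⁻¹ ∈ Z is weakly bounded: for each fixed h ∈ G, the set {ω(g,h) : g ∈ G} is finite. -/
open Set Pointwise

/-- Word length of `g` with respect to a (symmetrized) generating set `T`. -/
noncomputable def wl {X : Type*} [Group X] (T : Set X) (g : X) : ℕ :=
  sInf {n | ∃ l : List X, l.length = n ∧ (∀ y ∈ l, y ∈ T ∨ y⁻¹ ∈ T) ∧ l.prod = g}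

lemma aux_prod_mem_pow {M : Type*} [Monoid M] (S : Set M) :
    ∀ l : List M, (∀ y ∈ l, y ∈ S) → l.prod ∈ S ^ l.length := by
  intro l
  induction l with
  | nil => intro _; simp
  | cons a t ih =>
      intro hmem
      simp only [List.prod_cons, List.length_cons]
      rw [pow_succ']
      exact Set.mul_mem_mul (hmem a (by simp))
        (ih (fun y hy => hmem y (by simp [hy])))

lemma aux_finite_pow {M : Type*} [Monoid M] {S : Set M} (hS : S.Finite) (n : ℕ) :
    (S ^ n).Finite := by
  induction n with
  | zero => simp [Set.finite_singleton]
  | succ m ih => rw [pow_succ]; exact ih.mul hS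

/-- Let `1 → Z → E → G → 1` be a central extension with `G` finitely generated by `SG`
and `Z` finitely generated abelian (generated by `SZ`), and let `s : G → E` be a
normalized set-theoretic section.  If `s` is Lipschitz with respect to the word metrics
(on `E` taken with respect to the lifts `s(SG)` together with `i(SZ)`), then the
associated cocycle `ω(g,h) = s(g)s(h)s(gh)⁻¹` is weakly bounded: for each fixed `h`,
the set `{ω(g,h) : g ∈ G}` is finite. -/
theorem stmt15 {G E Z : Type*} [Group G] [Group E] [CommGroup Z] [Group.FG Z]
    (SG : Finset G) (hSG : Subgroup.closure (SG : Set G) = ⊤)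
    (SZ : Finset Z) (hSZ : Subgroup.closure (SZ : Set Z) = ⊤)
    (i : Z →* E) (π : E →* G)
    (hi : Function.Injective i)
    (hcent : ∀ (z : Z) (e : E), Commute (i z) e)
    (hker : ∀ e : E, π e = 1 ↔ e ∈ Set.range i)
    (hsurj : Function.Surjective π)
    (s : G → E) (hs : ∀ g : G, π (s g) = g) (hs1 : s 1 = 1)
    (k : ℕ)
    (hlip : ∀ g g' : G,
      wl ((s '' (SG : Set G)) ∪ (i '' (SZ : Set Z))) ((s g)⁻¹ * s g') ≤
        k * wl (SG : Set G) (g⁻¹ * g')) :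
    ∀ h : G, (Set.range fun g : G => s g * s h * (s (g * h))⁻¹).Finite := by
  intro h
  set T : Set E := (s '' (SG : Set G)) ∪ (i '' (SZ : Set Z)) with hT
  have hTfin : T.Finite := (SG.finite_toSet.image s).union (SZ.finite_toSet.image i)
  -- T generates E
  have hgen : ∀ e : E, e ∈ Subgroup.closure T := by
    intro e
    set H := Subgroup.closure T with hH
    have hmap : ∃ e' ∈ H, π e' = π e := by
      have h1 : Subgroup.closure (SG : Set G) ≤ H.map π := by
        rw [Subgroup.closure_le]
        intro x hx
        exact ⟨s x, Subgroup.subset_closure (Or.inl ⟨x, hx, rfl⟩), hs x⟩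
      rw [hSG] at h1
      obtain ⟨e', he', hpe⟩ := h1 (Subgroup.mem_top (π e))
      exact ⟨e', he', hpe⟩
    obtain ⟨e', he', hpe⟩ := hmap
    have hk1 : π (e * e'⁻¹) = 1 := by simp [hpe]
    rw [hker] at hk1
    obtain ⟨z, hz⟩ := hk1
    have hiz : i z ∈ H := by
      have h2 : i z ∈ (Subgroup.closure (SZ : Set Z)).map i := by
        rw [hSZ]; exact ⟨z, Subgroup.mem_top z, rfl⟩
      rw [MonoidHom.map_closure] at h2
      exact Subgroup.closure_mono Set.subset_union_right h2
    have : e = (i z) * e' := by rw [hz]; group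
    rw [this]; exact H.mul_mem hiz he'
  -- every element has a word of length `wl T e`
  have hword : ∀ e : E, ∃ l : List E, l.length = wl T e ∧
      (∀ y ∈ l, y ∈ T ∨ y⁻¹ ∈ T) ∧ l.prod = e := by
    intro e
    have hne : {n | ∃ l : List E, l.length = n ∧ (∀ y ∈ l, y ∈ T ∨ y⁻¹ ∈ T) ∧
        l.prod = e}.Nonempty := by
      have he : e ∈ Submonoid.closure (T ∪ T⁻¹) := by
        rw [← Subgroup.closure_toSubmonoid]
        exact hgen e
      obtain ⟨l, hl1, hl2⟩ := Submonoid.exists_list_of_mem_closure he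
      refine ⟨l.length, l, rfl, fun y hy => ?_, hl2⟩
      rcases hl1 y hy with hy' | hy'
      · exact Or.inl hy'
      · exact Or.inr (Set.mem_inv.mp hy')
    exact Nat.sInf_mem hne
  -- the finite "ball"
  set S : Set E := insert 1 (T ∪ T⁻¹) with hSdef
  have hSfin : S.Finite := ((hTfin.union hTfin.inv)).insert 1
  set C : ℕ := k * wl (SG : Set G) h⁻¹ + k * wl (SG : Set G) h with hC
  refine Set.Finite.subset (aux_finite_pow hSfin C) ?_
  rintro _ ⟨g, rfl⟩
  -- rearrange the cocycle using centrality
  have hπω : π (s g * s h * (s (g * h))⁻¹) = 1 := by simp [hs]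
  rw [hker] at hπω
  obtain ⟨z, hz⟩ := hπω
  have hcomm : Commute (s g * s h * (s (g * h))⁻¹) (s (g * h)) := by
    rw [← hz]; exact hcent z _
  have hrw : s g * s h * (s (g * h))⁻¹ = ((s (g * h))⁻¹ * s g) * s h := by
    have h2 : s (g * h) * (s g * s h * (s (g * h))⁻¹) = s g * s h := by
      rw [← hcomm.eq]; group
    conv_rhs => rw [mul_assoc ((s (g * h))⁻¹), ← h2]
    group
  obtain ⟨l1, hl1len, hl1mem, hl1prod⟩ := hword ((s (g * h))⁻¹ * s g)
  obtain ⟨l2, hl2len, hl2mem, hl2prod⟩ := hword (s h)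
  have hb1 : l1.length ≤ k * wl (SG : Set G) h⁻¹ := by
    rw [hl1len]
    have := hlip (g * h) g
    simpa [mul_inv_rev, mul_assoc] using this
  have hb2 : l2.length ≤ k * wl (SG : Set G) h := by
    rw [hl2len]
    have := hlip 1 h
    simpa [hs1] using this
  have h1S : (1 : E) ∈ S := Set.mem_insert 1 _
  have hmemS : ∀ y ∈ l1 ++ l2, y ∈ S := by
    intro y hy
    have : y ∈ T ∨ y⁻¹ ∈ T := by
      rcases List.mem_append.mp hy with hy' | hy'
      · exact hl1mem y hy'
      · exact hl2mem y hy'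
    rcases this with hy' | hy'
    · exact Set.mem_insert_iff.mpr (Or.inr (Or.inl hy'))
    · exact Set.mem_insert_iff.mpr (Or.inr (Or.inr (Set.mem_inv.mpr hy')))
  have hprod : (l1 ++ l2).prod = s g * s h * (s (g * h))⁻¹ := by
    rw [List.prod_append, hl1prod, hl2prod, hrw]
  have hlen : (l1 ++ l2).length ≤ C := by
    rw [List.length_append]
    exact Nat.add_le_add hb1 hb2
  have := aux_prod_mem_pow S (l1 ++ l2) hmemS
  rw [hprod] at this
  exact Set.pow_subset_pow_right h1S hlen this
end

section
/- Let G be a finitely generated group with finite symmetric generating set S, Z a finitely generated abelian group with generating set S', and 1 → Z → E →^π G → 1 a central extension with normalized section s : G → E whose cocycle ω(g,h) = s(g)s(h)s(gh)⁻¹ satisfies ‖ω(g,x)‖_{S'} ≤ C for all g ∈ G, x ∈ S. Then ‖s(g)‖_{S̄} ≤ (1+C)‖g‖_S for all g ∈ G (with S̄ the generating set of E consisting of lifts s(x), x ∈ S, and i(z), z ∈ S'), and s is Lipschitz: d_E(s(g),s(h)) ≤ (1+3C)·d_G(g,h) for all g,h ∈ G. -/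
lemma wl_le {X : Type*} [Group X] {T : Set X} {g : X} {l : List X}
    (hl : ∀ y ∈ l, y ∈ T ∨ y⁻¹ ∈ T) (hp : l.prod = g) : wl T g ≤ l.length :=
  Nat.sInf_le ⟨l, rfl, hl, hp⟩

lemma exists_list_of_closure {X : Type*} [Group X] {T : Set X}
    (h : Subgroup.closure T = ⊤) (g : X) :
    ∃ l : List X, (∀ y ∈ l, y ∈ T ∨ y⁻¹ ∈ T) ∧ l.prod = g := by
  have hg : g ∈ Submonoid.closure (T ∪ T⁻¹) := by
    rw [← Subgroup.closure_toSubmonoid, h]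
    trivial
  obtain ⟨l, hl, hp⟩ := Submonoid.exists_list_of_mem_closure hg
  refine ⟨l, fun y hy => ?_, hp⟩
  rcases hl y hy with h | h
  · exact Or.inl h
  · exact Or.inr (Set.mem_inv.mp h)

lemma exists_min_list {X : Type*} [Group X] {T : Set X}
    (h : Subgroup.closure T = ⊤) (g : X) :
    ∃ l : List X, (∀ y ∈ l, y ∈ T ∨ y⁻¹ ∈ T) ∧ l.prod = g ∧ l.length = wl T g := by
  obtain ⟨l, hl, hp⟩ := exists_list_of_closure h g
  have hne : {n | ∃ l : List X, l.length = n ∧ (∀ y ∈ l, y ∈ T ∨ y⁻¹ ∈ T) ∧ l.prod = g}.Nonempty :=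
    ⟨l.length, l, rfl, hl, hp⟩
  obtain ⟨m, hm1, hm2, hm3⟩ := Nat.sInf_mem hne
  exact ⟨m, hm2, hm3, hm1⟩

lemma inv_list {X : Type*} [Group X] {T : Set X} {l : List X}
    (hl : ∀ y ∈ l, y ∈ T ∨ y⁻¹ ∈ T) :
    ∃ m : List X, (∀ y ∈ m, y ∈ T ∨ y⁻¹ ∈ T) ∧ m.prod = l.prod⁻¹ ∧ m.length = l.length := by
  refine ⟨(l.map fun x => x⁻¹).reverse, ?_, (List.prod_inv_reverse l).symm, by simp⟩
  intro y hy
  simp only [List.mem_reverse, List.mem_map] at hy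
  obtain ⟨x, hx, rfl⟩ := hy
  rcases hl x hx with h | h
  · exact Or.inr (by simpa using h)
  · exact Or.inl h

lemma wl_mul {X : Type*} [Group X] {T : Set X} (h : Subgroup.closure T = ⊤) (a b : X) :
    wl T (a * b) ≤ wl T a + wl T b := by
  obtain ⟨la, hla, hpa, hna⟩ := exists_min_list h a
  obtain ⟨lb, hlb, hpb, hnb⟩ := exists_min_list h b
  have := wl_le (l := la ++ lb) (g := a * b) (fun y hy => by
    rcases List.mem_append.mp hy with hy | hy
    exacts [hla y hy, hlb y hy]) (by rw [List.prod_append, hpa, hpb])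
  simp only [List.length_append, hna, hnb] at this
  exact this

lemma wl_inv {X : Type*} [Group X] {T : Set X} (h : Subgroup.closure T = ⊤) (a : X) :
    wl T a⁻¹ ≤ wl T a := by
  obtain ⟨la, hla, hpa, hna⟩ := exists_min_list h a
  obtain ⟨m, hm, hpm, hnm⟩ := inv_list hla
  have := wl_le hm (by rw [hpm, hpa])
  omega

/-- Let `1 → Z → E → G → 1` be a central extension with `G` generated by the finite
symmetric set `SG` and `Z` finitely generated abelian (generated by `SZ`), and let
`s : G → E` be a normalized section whose cocycle `ω(g,h) = s(g)s(h)s(gh)⁻¹` satisfies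
`‖ω(g,x)‖ ≤ C` for all `g ∈ G`, `x ∈ SG`. Then `‖s(g)‖ ≤ (1+C)‖g‖` for all `g`, and
`s` is `(1+3C)`-Lipschitz for the word metrics. -/
theorem stmt16 {G E Z : Type*} [Group G] [Group E] [CommGroup Z] [Group.FG Z]
    (SG : Finset G) (hSG : Subgroup.closure (SG : Set G) = ⊤)
    (hSGsymm : ∀ x ∈ SG, x⁻¹ ∈ SG)
    (SZ : Finset Z) (hSZ : Subgroup.closure (SZ : Set Z) = ⊤)
    (i : Z →* E) (π : E →* G)
    (hi : Function.Injective i)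
    (hcent : ∀ (z : Z) (e : E), Commute (i z) e)
    (hker : ∀ e : E, π e = 1 ↔ e ∈ Set.range i)
    (hsurj : Function.Surjective π)
    (s : G → E) (hs : ∀ g : G, π (s g) = g) (hs1 : s 1 = 1)
    (ω : G → G → Z) (hω : ∀ g h : G, i (ω g h) = s g * s h * (s (g * h))⁻¹)
    (C : ℕ) (hC : ∀ g : G, ∀ x ∈ SG, wl (SZ : Set Z) (ω g x) ≤ C) :
    (∀ g : G,
      wl ((s '' (SG : Set G)) ∪ (i '' (SZ : Set Z))) (s g) ≤ (1 + C) * wl (SG : Set G) g) ∧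
    (∀ g h : G,
      wl ((s '' (SG : Set G)) ∪ (i '' (SZ : Set Z))) ((s g)⁻¹ * s h) ≤
        (1 + 3 * C) * wl (SG : Set G) (g⁻¹ * h)) := by
  set SE : Set E := (s '' (SG : Set G)) ∪ (i '' (SZ : Set Z)) with hSE
  -- cocycle identity
  have key : ∀ g x y : G, ω g (x * y) * ω x y = ω g x * ω (g * x) y := by
    intro g x y
    apply hi
    rw [map_mul, map_mul, hω, hω, hω, hω]
    have hc : (s x * s y * (s (x*y))⁻¹) * (s (x*y) * (s (g*(x*y)))⁻¹)
        = (s (x*y) * (s (g*(x*y)))⁻¹) * (s x * s y * (s (x*y))⁻¹) := by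
      have := (hcent (ω x y) (s (x*y) * (s (g*(x*y)))⁻¹)).eq
      rwa [hω] at this
    calc s g * s (x*y) * (s (g*(x*y)))⁻¹ * (s x * s y * (s (x*y))⁻¹)
        = s g * ((s (x*y) * (s (g*(x*y)))⁻¹) * (s x * s y * (s (x*y))⁻¹)) := by group
      _ = s g * ((s x * s y * (s (x*y))⁻¹) * (s (x*y) * (s (g*(x*y)))⁻¹)) := by rw [← hc]
      _ = s g * s x * (s (g*x))⁻¹ * (s (g*x) * s y * (s (g*x*y))⁻¹) := by
          rw [mul_assoc g x y]; group
  have homega1 : ∀ g : G, ω g 1 = 1 := by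
    intro g
    apply hi
    rw [hω, map_one, hs1, mul_one, mul_one, mul_inv_cancel]
  have hwl_one : wl (SZ : Set Z) (1 : Z) = 0 :=
    Nat.le_zero.mp (wl_le (l := []) (by simp) (by simp))
  -- linear growth of the cocycle
  have grow : ∀ l : List G, (∀ y ∈ l, y ∈ SG) → ∀ g : G,
      wl (SZ : Set Z) (ω g l.prod) ≤ 2 * C * l.length := by
    intro l
    induction l using List.reverseRecOn with
    | nil => intro _ g; simp [homega1, hwl_one]
    | append_singleton l x ih =>
      intro hmem g
      have hx : x ∈ SG := hmem x (by simp)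
      have hl : ∀ y ∈ l, y ∈ SG := fun y hy => hmem y (by simp [hy])
      have heq : ω g (l.prod * x) = ω g l.prod * ω (g * l.prod) x * (ω l.prod x)⁻¹ := by
        rw [eq_mul_inv_iff_mul_eq]; exact key g l.prod x
      have h1 : wl (SZ : Set Z) (ω g (l.prod * x)) ≤
          wl (SZ : Set Z) (ω g l.prod) + wl (SZ : Set Z) (ω (g * l.prod) x)
            + wl (SZ : Set Z) ((ω l.prod x)⁻¹) := by
        rw [heq]
        calc wl (SZ : Set Z) (ω g l.prod * ω (g * l.prod) x * (ω l.prod x)⁻¹)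
            ≤ wl (SZ : Set Z) (ω g l.prod * ω (g * l.prod) x)
              + wl (SZ : Set Z) ((ω l.prod x)⁻¹) := wl_mul hSZ _ _
          _ ≤ _ := by
              have := wl_mul hSZ (ω g l.prod) (ω (g * l.prod) x)
              omega
      have h2 := hC (g * l.prod) x hx
      have h3 : wl (SZ : Set Z) ((ω l.prod x)⁻¹) ≤ C :=
        le_trans (wl_inv hSZ _) (hC l.prod x hx)
      have h4 := ih hl g
      rw [List.prod_append, List.prod_singleton, List.length_append, List.length_singleton]
      have : 2 * C * (l.length + 1) = 2 * C * l.length + 2 * C := by ring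
      omega
  -- main bound: a list in E for s (l.prod)
  have main : ∀ l : List G, (∀ y ∈ l, y ∈ SG) →
      ∃ m : List E, (∀ y ∈ m, y ∈ SE ∨ y⁻¹ ∈ SE) ∧ m.prod = s l.prod ∧
        m.length ≤ (1 + C) * l.length := by
    intro l
    induction l using List.reverseRecOn with
    | nil => exact fun _ => ⟨[], by simp, by simp [hs1], by simp⟩
    | append_singleton l x ih =>
      intro hmem
      have hx : x ∈ SG := hmem x (by simp)
      have hl : ∀ y ∈ l, y ∈ SG := fun y hy => hmem y (by simp [hy])
      obtain ⟨m, hm, hpm, hnm⟩ := ih hl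
      -- list for i (ω l.prod x) and its inverse
      obtain ⟨lz, hlz, hpz, hnz⟩ := exists_min_list hSZ (ω l.prod x)
      have hnz' : lz.length ≤ C := by rw [hnz]; exact hC l.prod x hx
      set mz : List E := lz.map i with hmz
      have hmzmem : ∀ y ∈ mz, y ∈ SE ∨ y⁻¹ ∈ SE := by
        intro y hy
        simp only [hmz, List.mem_map] at hy
        obtain ⟨z, hz, rfl⟩ := hy
        rcases hlz z hz with h | h
        · exact Or.inl (Or.inr ⟨z, h, rfl⟩)
        · exact Or.inr (Or.inr ⟨z⁻¹, h, by simp⟩)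
      have hmzprod : mz.prod = i (ω l.prod x) := by
        rw [hmz, ← map_list_prod, hpz]
      have hmzlen : mz.length = lz.length := by simp [hmz]
      obtain ⟨minv, hminv, hpminv, hnminv⟩ := inv_list hmzmem
      refine ⟨minv ++ m ++ [s x], ?_, ?_, ?_⟩
      · intro y hy
        simp only [List.mem_append, List.mem_singleton] at hy
        rcases hy with (hy | hy) | rfl
        · exact hminv y hy
        · exact hm y hy
        · exact Or.inl (Or.inl ⟨x, hx, rfl⟩)
      · rw [List.prod_append, List.prod_append, List.prod_singleton, hpminv, hmzprod, hpm]
        have : s (l.prod * x) = (i (ω l.prod x))⁻¹ * s l.prod * s x := by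
          rw [hω]; group
        rw [List.prod_append, List.prod_singleton, this]
      · simp only [List.length_append, List.length_singleton, List.prod_append]
        have : (1 + C) * (l.length + 1) = (1 + C) * l.length + 1 + C := by ring
        omega
  constructor
  · intro g
    obtain ⟨l, hl, hp, hn⟩ := exists_min_list hSG g
    have hl' : ∀ y ∈ l, y ∈ SG := by
      intro y hy
      rcases hl y hy with h | h
      · exact h
      · simpa using hSGsymm _ h
    obtain ⟨m, hm, hpm, hnm⟩ := main l hl'
    have := wl_le hm (by rw [hpm, hp])
    rw [← hn]
    omega
  · intro g h
    obtain ⟨l, hl, hp, hn⟩ := exists_min_list hSG (g⁻¹ * h)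
    have hl' : ∀ y ∈ l, y ∈ SG := by
      intro y hy
      rcases hl y hy with hh | hh
      · exact hh
      · simpa using hSGsymm _ hh
    obtain ⟨m, hm, hpm, hnm⟩ := main l hl'
    -- bound on the cocycle ω g (g⁻¹ h)
    have hgrow : wl (SZ : Set Z) (ω g (g⁻¹ * h)) ≤ 2 * C * l.length := by
      have := grow l hl' g
      rwa [hp] at this
    obtain ⟨lz, hlz, hpz, hnz⟩ := exists_min_list hSZ (ω g (g⁻¹ * h))
    have hnz' : lz.length ≤ 2 * C * l.length := by omega
    set mz : List E := lz.map i with hmz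
    have hmzmem : ∀ y ∈ mz, y ∈ SE ∨ y⁻¹ ∈ SE := by
      intro y hy
      simp only [hmz, List.mem_map] at hy
      obtain ⟨z, hz, rfl⟩ := hy
      rcases hlz z hz with hh | hh
      · exact Or.inl (Or.inr ⟨z, hh, rfl⟩)
      · exact Or.inr (Or.inr ⟨z⁻¹, hh, by simp⟩)
    have hmzprod : mz.prod = i (ω g (g⁻¹ * h)) := by
      rw [hmz, ← map_list_prod, hpz]
    have hmzlen : mz.length = lz.length := by simp [hmz]
    obtain ⟨minv, hminv, hpminv, hnminv⟩ := inv_list hmzmem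
    have hE : (s g)⁻¹ * s h = (i (ω g (g⁻¹ * h)))⁻¹ * s (g⁻¹ * h) := by
      have h1 : i (ω g (g⁻¹ * h)) = s g * s (g⁻¹ * h) * (s h)⁻¹ := by
        rw [hω, mul_inv_cancel_left]
      have hc : (i (ω g (g⁻¹ * h)))⁻¹ * s g = s g * (i (ω g (g⁻¹ * h)))⁻¹ :=
        ((hcent (ω g (g⁻¹ * h)) (s g)).inv_left).eq
      have h2 : s g * ((i (ω g (g⁻¹ * h)))⁻¹ * s (g⁻¹ * h)) = s h := by
        rw [← mul_assoc, ← hc, mul_assoc, h1]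
        group
      rw [← h2]
      group
    have hfinal := wl_le (l := minv ++ m) (g := (s g)⁻¹ * s h)
      (fun y hy => by
        rcases List.mem_append.mp hy with hy | hy
        exacts [hminv y hy, hm y hy])
      (by rw [List.prod_append, hpminv, hmzprod, hpm, hp, hE])
    simp only [List.length_append] at hfinal
    have harith : 2 * C * l.length + (1 + C) * l.length = (1 + 3 * C) * l.length := by ring
    rw [← hn]
    omega
end
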